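/- arXiv:2507.21667 — 2 statements merged into one kernel-verified Lean document; each statement's English description precedes it below -/
import Mathlib

section
/- Let A ∈ ℝ^{N×N} be an entrywise nonnegative matrix with zero diagonal whose associated directed graph is strongly connected (i.e., for every nonempty proper subset S of {1,…,N} there exist i ∉ S and j ∈ S with A i j > 0), let D = diag(d_1,…,d_N) with d_i = Σ_j a_{ij}, let L = D − A, and let B = diag(b_1,…,b_N) with b_i ≥ 0 for all i and b_i > 0 for at least one i. Then the matrix L + B is nonsingular. -/
/-!
If `(L + B) x = 0` with `x ≠ 0`, row `i` reads `(dᵢ + bᵢ) xᵢ = ∑ⱼ aᵢⱼ xⱼ`. At an index where `|xᵢ|`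
is maximal, the triangle inequality forces `bᵢ = 0` and `|xⱼ| = |xᵢ|` for every edge `j → i`
(a discrete maximum principle). So the set of maximizers of `|x|` is nonempty and has no incoming
edge from outside; by strong connectivity it is everything, contradicting `bᵢ > 0` somewhere.
-/

open Matrix Finset

variable {ι : Type*} [Fintype ι]

lemma laplacian_add_diagonal_mulVec_apply {R : Type*} [CommRing R] [DecidableEq ι]
    (A : Matrix ι ι R) (b x : ι → R) (i : ι) :
    ((diagonal (fun i => ∑ j, A i j) - A + diagonal b) *ᵥ x) i
      = (∑ j, A i j + b i) * x i - ∑ j, A i j * x j := by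
  rw [add_mulVec, sub_mulVec, Pi.add_apply, Pi.sub_apply, mulVec_diagonal, mulVec_diagonal]
  simp only [mulVec, dotProduct]
  ring

lemma eq_zero_and_abs_eq_of_mul_eq_sum_mul {a y : ι → ℝ} {c t : ℝ}
    (ha : ∀ j, 0 ≤ a j) (hc : 0 ≤ c) (hy : ∀ j, |y j| ≤ |t|) (ht : 0 < |t|)
    (h : (∑ j, a j + c) * t = ∑ j, a j * y j) :
    c = 0 ∧ ∀ j, 0 < a j → |y j| = |t| := by
  have hlower : (∑ j, a j + c) * |t| ≤ ∑ j, a j * |y j| :=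
    calc (∑ j, a j + c) * |t| = |∑ j, a j * y j| := by
          rw [← h, abs_mul, abs_of_nonneg (add_nonneg (sum_nonneg fun j _ => ha j) hc)]
      _ ≤ ∑ j, |a j * y j| := abs_sum_le_sum_abs _ _
      _ = ∑ j, a j * |y j| := sum_congr rfl fun j _ => by rw [abs_mul, abs_of_nonneg (ha j)]
  have hgap : ∑ j, a j * (|t| - |y j|) = (∑ j, a j) * |t| - ∑ j, a j * |y j| := by
    rw [sum_mul, ← sum_sub_distrib]
    exact sum_congr rfl fun j _ => by ring
  have hgap_nonneg : ∀ j ∈ univ, 0 ≤ a j * (|t| - |y j|) :=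
    fun j _ => mul_nonneg (ha j) (sub_nonneg.2 (hy j))
  have hgap_le : ∑ j, a j * (|t| - |y j|) ≤ -(c * |t|) := by rw [hgap]; linarith
  have hc0 : c * |t| ≤ 0 := by linarith [sum_nonneg hgap_nonneg]
  refine ⟨le_antisymm (nonpos_of_mul_nonpos_left hc0 ht) hc, fun j hj => ?_⟩
  have hgap0 : ∑ j, a j * (|t| - |y j|) = 0 :=
    le_antisymm (hgap_le.trans (neg_nonpos.2 (mul_nonneg hc ht.le))) (sum_nonneg hgap_nonneg)
  have hterm := (sum_eq_zero_iff_of_nonneg hgap_nonneg).1 hgap0 j (mem_univ j)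
  linarith [(mul_eq_zero.1 hterm).resolve_left hj.ne']

lemma eq_zero_and_abs_eq_of_laplacian_add_diagonal_mulVec_eq_zero [DecidableEq ι]
    {A : Matrix ι ι ℝ} {b x : ι → ℝ} (hA : ∀ i j, 0 ≤ A i j) (hb : ∀ i, 0 ≤ b i)
    (hx : (diagonal (fun i => ∑ j, A i j) - A + diagonal b) *ᵥ x = 0) (hx0 : x ≠ 0)
    {i : ι} (hi : ∀ j, |x j| ≤ |x i|) :
    b i = 0 ∧ ∀ j, 0 < A i j → |x j| = |x i| := by
  obtain ⟨k, hk⟩ := Function.ne_iff.1 hx0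
  have hrow := congrFun hx i
  rw [laplacian_add_diagonal_mulVec_apply, Pi.zero_apply, sub_eq_zero] at hrow
  exact eq_zero_and_abs_eq_of_mul_eq_sum_mul (hA i) (hb i) hi
    ((abs_pos.2 hk).trans_le (hi k)) hrow

lemma eq_univ_of_forall_mem_of_pos {A : Matrix ι ι ℝ}
    (hconn : ∀ S : Finset ι, S.Nonempty → S ≠ univ → ∃ i ∉ S, ∃ j ∈ S, 0 < A i j)
    {S : Finset ι} (hS : S.Nonempty) (hclosed : ∀ i ∈ S, ∀ j, 0 < A i j → j ∈ S) :
    S = univ := by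
  classical
  by_contra hS_univ
  obtain ⟨i, hi, j, hj, hij⟩ := hconn Sᶜ
    ((compl_ne_univ_iff_nonempty Sᶜ).1 (by rwa [compl_compl]))
    ((compl_ne_univ_iff_nonempty S).2 hS)
  exact mem_compl.1 hj (hclosed i (notMem_compl.1 hi) j hij)

theorem laplacian_plus_pinning_nonsingular_general
    {N : ℕ} (A : Matrix (Fin N) (Fin N) ℝ)
    (hA_nonneg : ∀ i j, 0 ≤ A i j)
    (hconn : ∀ S : Finset (Fin N), S.Nonempty → S ≠ Finset.univ →
      ∃ i ∉ S, ∃ j ∈ S, 0 < A i j)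
    (b : Fin N → ℝ)
    (hb_nonneg : ∀ i, 0 ≤ b i)
    (hb_pos : ∃ i, 0 < b i)
    (D : Matrix (Fin N) (Fin N) ℝ) (hD : D = Matrix.diagonal (fun i => ∑ j, A i j))
    (L : Matrix (Fin N) (Fin N) ℝ) (hL : L = D - A)
    (B : Matrix (Fin N) (Fin N) ℝ) (hB : B = Matrix.diagonal b) :
    (L + B).det ≠ 0 := by
  subst hD hL hB
  intro hdet
  obtain ⟨x, hx0, hx⟩ := exists_mulVec_eq_zero_iff.2 hdet
  obtain ⟨k, hk⟩ := hb_pos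
  obtain ⟨i₀, -, hi₀⟩ := exists_max_image univ (fun j => |x j|) ⟨k, mem_univ k⟩
  have hmax {i} (hi : ∀ j, |x j| ≤ |x i|) :=
    eq_zero_and_abs_eq_of_laplacian_add_diagonal_mulVec_eq_zero hA_nonneg hb_nonneg hx hx0 hi
  set S := univ.filter fun j => |x j| = |x i₀|
  have hS_univ : S = univ := by
    refine eq_univ_of_forall_mem_of_pos hconn ⟨i₀, by simp [S]⟩ fun i hi j hij => ?_
    have hi : |x i| = |x i₀| := (mem_filter.1 hi).2
    have hj := (hmax fun j => hi ▸ hi₀ j (mem_univ j)).2 j hij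
    simp [S, hj, hi]
  have hkS : k ∈ S := hS_univ ▸ mem_univ k
  have hk_max : |x k| = |x i₀| := (mem_filter.1 hkS).2
  exact hk.ne' (hmax fun j => hk_max ▸ hi₀ j (mem_univ j)).1

/-- For an entrywise nonnegative adjacency matrix `A` with zero diagonal
whose directed graph is strongly connected, `D` the in-degree matrix, `L = D - A`
the Laplacian, and `B` a nonnegative diagonal matrix with at least one positive
entry, the matrix `L + B` is nonsingular. -/
theorem laplacian_plus_pinning_nonsingular
    {N : ℕ} (A : Matrix (Fin N) (Fin N) ℝ)
    (hA_nonneg : ∀ i j, 0 ≤ A i j)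
    (hA_diag : ∀ i, A i i = 0)
    (hconn : ∀ S : Finset (Fin N), S.Nonempty → S ≠ Finset.univ →
      ∃ i ∉ S, ∃ j ∈ S, 0 < A i j)
    (b : Fin N → ℝ)
    (hb_nonneg : ∀ i, 0 ≤ b i)
    (hb_pos : ∃ i, 0 < b i)
    (D : Matrix (Fin N) (Fin N) ℝ) (hD : D = Matrix.diagonal (fun i => ∑ j, A i j))
    (L : Matrix (Fin N) (Fin N) ℝ) (hL : L = D - A)
    (B : Matrix (Fin N) (Fin N) ℝ) (hB : B = Matrix.diagonal b) :
    (L + B).det ≠ 0 :=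
  laplacian_plus_pinning_nonsingular_general A hA_nonneg hconn b hb_nonneg hb_pos D hD L hL B hB
end

section
/- Let A ∈ ℝ^{N×N} be an entrywise nonnegative matrix with zero diagonal whose associated directed graph is strongly connected, let D = diag(d_i) with d_i = Σ_j a_{ij}, L = D − A, and B = diag(b_i) with all b_i ≥ 0 and at least one b_i > 0. Then the vector q = (L + B)^{-1} 1 (where 1 ∈ ℝ^N is the all-ones vector) has all entries strictly positive. -/
open Matrix Finset

/-!
Write `M = L + B`, so that `(M x)_i = b_i x_i + ∑_j a_ij (x_i - x_j)`. At a minimum of `q` every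
difference `q_i - q_j` is nonpositive, so `M q = 1` forces `b_i q_i ≥ 1` there, whence `q > 0`.
Invertibility of `M` is a maximum principle: if `M x ≤ 0` and `x` had a positive maximum, the set
where it is attained would be closed under the in-edges of the graph and carry `b = 0`; by strong
connectivity it is everything, contradicting `b ≠ 0`. Applying this to `x` and `-x` when `M x = 0`
gives `x = 0`.
-/

variable {ι : Type*} [Fintype ι]

def StronglyConnected (A : Matrix ι ι ℝ) : Prop :=
  ∀ S : Finset ι, S.Nonempty → S ≠ univ → ∃ i ∉ S, ∃ j ∈ S, 0 < A i j

theorem StronglyConnected.eq_univ {A : Matrix ι ι ℝ} (hA : StronglyConnected A) {S : Finset ι}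
    (hS : S.Nonempty) (hclosed : ∀ i ∈ S, ∀ j, 0 < A i j → j ∈ S) : S = univ := by
  classical
  by_contra hSu
  have hSc : Sᶜ.Nonempty := nonempty_iff_ne_empty.mpr ((compl_eq_empty_iff S).not.mpr hSu)
  obtain ⟨i, hi, j, hj, hAij⟩ := hA Sᶜ hSc ((compl_ne_univ_iff_nonempty S).mpr hS)
  exact mem_compl.mp hj (hclosed i (by simpa using hi) j hAij)

variable [DecidableEq ι]

def groundedLaplacian (A : Matrix ι ι ℝ) (b : ι → ℝ) : Matrix ι ι ℝ :=
  diagonal (fun i => ∑ j, A i j) - A + diagonal b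

section groundedLaplacian

variable {A : Matrix ι ι ℝ} {b x : ι → ℝ}

theorem groundedLaplacian_mulVec_apply (A : Matrix ι ι ℝ) (b x : ι → ℝ) (i : ι) :
    (groundedLaplacian A b *ᵥ x) i = b i * x i + ∑ j, A i j * (x i - x j) := by
  simp only [groundedLaplacian, add_mulVec, sub_mulVec, Pi.add_apply, Pi.sub_apply,
    mulVec_diagonal, mul_sub, sum_sub_distrib, ← sum_mul]
  rw [mulVec, dotProduct]
  ring

theorem eq_zero_and_eq_of_isMax_of_groundedLaplacian_mulVec_nonpos
    (hA : ∀ i j, 0 ≤ A i j) (hb : ∀ i, 0 ≤ b i) {i : ι} (hmax : ∀ j, x j ≤ x i) (hx : 0 < x i)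
    (hMx : (groundedLaplacian A b *ᵥ x) i ≤ 0) : b i = 0 ∧ ∀ j, 0 < A i j → x j = x i := by
  rw [groundedLaplacian_mulVec_apply] at hMx
  have hterm : ∀ j ∈ univ, 0 ≤ A i j * (x i - x j) :=
    fun j _ => mul_nonneg (hA i j) (sub_nonneg.mpr (hmax j))
  have hsum := sum_nonneg hterm
  have hbx := mul_nonneg (hb i) hx.le
  have hsum0 : ∑ j, A i j * (x i - x j) = 0 := by linarith
  refine ⟨(mul_eq_zero.mp (by linarith : b i * x i = 0)).resolve_right hx.ne', fun j hAij => ?_⟩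
  have hj := (sum_eq_zero_iff_of_nonneg hterm).mp hsum0 j (mem_univ j)
  linarith [(mul_eq_zero.mp hj).resolve_left hAij.ne']

theorem nonpos_of_groundedLaplacian_mulVec_nonpos (hconn : StronglyConnected A)
    (hA : ∀ i j, 0 ≤ A i j) (hb : ∀ i, 0 ≤ b i) (hb_pos : ∃ i, 0 < b i)
    (hMx : ∀ i, (groundedLaplacian A b *ᵥ x) i ≤ 0) (i : ι) : x i ≤ 0 := by
  by_contra! hxi
  obtain ⟨m, -, hm⟩ := exists_max_image univ x ⟨i, mem_univ i⟩
  have hmax : ∀ j, x j ≤ x m := fun j => hm j (mem_univ j)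
  have hclosed : ∀ k ∈ univ.filter (x · = x m), b k = 0 ∧ ∀ j, 0 < A k j → x j = x m := by
    intro k hk
    have hxk : x k = x m := (mem_filter.mp hk).2
    rw [← hxk] at hmax ⊢
    exact eq_zero_and_eq_of_isMax_of_groundedLaplacian_mulVec_nonpos hA hb hmax
      (by linarith [hmax i]) (hMx k)
  have hall : univ.filter (x · = x m) = univ :=
    hconn.eq_univ ⟨m, by simp⟩ fun k hk j hAkj => by simp [(hclosed k hk).2 j hAkj]
  obtain ⟨k, hk⟩ := hb_pos
  exact hk.ne' (hclosed k (by rw [hall]; exact mem_univ k)).1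

theorem det_groundedLaplacian_ne_zero (hconn : StronglyConnected A)
    (hA : ∀ i j, 0 ≤ A i j) (hb : ∀ i, 0 ≤ b i) (hb_pos : ∃ i, 0 < b i) :
    (groundedLaplacian A b).det ≠ 0 := by
  have hker : ∀ v, groundedLaplacian A b *ᵥ v = 0 → ∀ i, v i ≤ 0 := fun v hv =>
    nonpos_of_groundedLaplacian_mulVec_nonpos hconn hA hb hb_pos (by simp [hv])
  intro hdet
  obtain ⟨v, hv, hMv⟩ := exists_mulVec_eq_zero_iff.mpr hdet
  have hMv' : groundedLaplacian A b *ᵥ (-v) = 0 := by rw [mulVec_neg, hMv, neg_zero]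
  exact hv (funext fun i => le_antisymm (hker v hMv i) (by simpa using hker (-v) hMv' i))

theorem pos_of_groundedLaplacian_mulVec_pos (hA : ∀ i j, 0 ≤ A i j) (hb : ∀ i, 0 ≤ b i)
    (hMx : ∀ i, 0 < (groundedLaplacian A b *ᵥ x) i) (i : ι) : 0 < x i := by
  obtain ⟨m, -, hm⟩ := exists_min_image univ x ⟨i, mem_univ i⟩
  have hdiff : ∑ j, A m j * (x m - x j) ≤ 0 :=
    sum_nonpos fun j _ =>
      mul_nonpos_of_nonneg_of_nonpos (hA m j) (sub_nonpos.mpr (hm j (mem_univ j)))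
  have hbx : 0 < b m * x m := by linarith [hMx m, groundedLaplacian_mulVec_apply A b x m]
  exact (pos_of_mul_pos_right hbx (hb m)).trans_le (hm i (mem_univ i))

end groundedLaplacian

theorem q_entries_positive_general
    {N : ℕ} (A : Matrix (Fin N) (Fin N) ℝ)
    (hA_nonneg : ∀ i j, 0 ≤ A i j)
    (hconn : ∀ S : Finset (Fin N), S.Nonempty → S ≠ Finset.univ →
      ∃ i ∉ S, ∃ j ∈ S, 0 < A i j)
    (b : Fin N → ℝ)
    (hb_nonneg : ∀ i, 0 ≤ b i)
    (hb_pos : ∃ i, 0 < b i)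
    (D : Matrix (Fin N) (Fin N) ℝ) (hD : D = Matrix.diagonal (fun i => ∑ j, A i j))
    (L : Matrix (Fin N) (Fin N) ℝ) (hL : L = D - A)
    (B : Matrix (Fin N) (Fin N) ℝ) (hB : B = Matrix.diagonal b)
    (q : Fin N → ℝ) (hq : q = (L + B)⁻¹ *ᵥ (fun _ => (1 : ℝ))) :
    ∀ i, 0 < q i := by
  have hM : L + B = groundedLaplacian A b := by rw [hL, hD, hB]; rfl
  have hdet := det_groundedLaplacian_ne_zero hconn hA_nonneg hb_nonneg hb_pos
  have hMq : groundedLaplacian A b *ᵥ q = fun _ => 1 := by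
    rw [hq, hM, mulVec_mulVec, mul_nonsing_inv _ (isUnit_iff_ne_zero.mpr hdet), one_mulVec]
  exact pos_of_groundedLaplacian_mulVec_pos hA_nonneg hb_nonneg (by simp [hMq])

/-- Under the strong-connectivity and pinning hypotheses, the vector
`q = (L + B)⁻¹ 1` has all entries strictly positive. -/
theorem q_entries_positive
    {N : ℕ} (A : Matrix (Fin N) (Fin N) ℝ)
    (hA_nonneg : ∀ i j, 0 ≤ A i j)
    (hA_diag : ∀ i, A i i = 0)
    (hconn : ∀ S : Finset (Fin N), S.Nonempty → S ≠ Finset.univ →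
      ∃ i ∉ S, ∃ j ∈ S, 0 < A i j)
    (b : Fin N → ℝ)
    (hb_nonneg : ∀ i, 0 ≤ b i)
    (hb_pos : ∃ i, 0 < b i)
    (D : Matrix (Fin N) (Fin N) ℝ) (hD : D = Matrix.diagonal (fun i => ∑ j, A i j))
    (L : Matrix (Fin N) (Fin N) ℝ) (hL : L = D - A)
    (B : Matrix (Fin N) (Fin N) ℝ) (hB : B = Matrix.diagonal b)
    (q : Fin N → ℝ) (hq : q = (L + B)⁻¹ *ᵥ (fun _ => (1 : ℝ))) :
    ∀ i, 0 < q i :=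
  q_entries_positive_general A hA_nonneg hconn b hb_nonneg hb_pos D hD L hL B hB q hq
end
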